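/- Consider the N×N game H(A,B) defined from the adjacency matrix A ∈ {0,1}^{n×n} of an n-node graph G (with ones on the diagonal) and a matrix B ∈ {0,M}^{(N−n)×n} with M > 0. Let K ⊆ [n] be a clique in G of size k, and suppose that for every row index i ∈ [N−n], (1/k) Σ_{j∈K} B_{i,j} ≤ 1. Then the strategy profile in which both players play uniformly at random over K is a Nash equilibrium of H(A,B), and its welfare equals 1. -/
import Mathlib


/-- A probability distribution on a finite type. -/
def IsDist {I : Type*} [Fintype I] (x : I → ℝ) : Prop :=
  (∀ i, 0 ≤ x i) ∧ ∑ i, x i = 1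

/-- `μ` is an `ε`-coarse correlated equilibrium of the game with payoff matrices `R, C`. -/
def IsCCE {I : Type*} [Fintype I] (R C : Matrix I I ℝ) (μ : I → I → ℝ) (ε : ℝ) : Prop :=
  (∀ a' : I, ∑ a, ∑ b, μ a b * R a b ≥ ∑ a, ∑ b, μ a b * R a' b - ε) ∧
  (∀ b' : I, ∑ a, ∑ b, μ a b * C a b ≥ ∑ a, ∑ b, μ a b * C a b' - ε)

/-- The (utilitarian) social welfare of a correlated distribution `μ`. -/
def sw {I : Type*} [Fintype I] (R C : Matrix I I ℝ) (μ : I → I → ℝ) : ℝ :=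
  ∑ a, ∑ b, μ a b * (R a b + C a b)

/-- Row payoff matrix of the game `H(A, B)`: `R = ½ [[A, −B.transpose], [B, 0]]`. -/
noncomputable def HR (n m : ℕ) (A : Matrix (Fin n) (Fin n) ℝ) (B : Matrix (Fin m) (Fin n) ℝ) :
    Matrix (Fin n ⊕ Fin m) (Fin n ⊕ Fin m) ℝ :=
  (1 / 2 : ℝ) • Matrix.fromBlocks A (-B.transpose) B 0

/-- Column payoff matrix of the game `H(A, B)`: `C = ½ [[A, B.transpose], [−B, 0]]`. -/
noncomputable def HC (n m : ℕ) (A : Matrix (Fin n) (Fin n) ℝ) (B : Matrix (Fin m) (Fin n) ℝ) :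
    Matrix (Fin n ⊕ Fin m) (Fin n ⊕ Fin m) ℝ :=
  (1 / 2 : ℝ) • Matrix.fromBlocks A B.transpose (-B) 0

/-- if `K` is a `k`-clique of `G` and every row of `B` has average at most `1`
over `K`, then both players playing uniformly over `K` is a Nash equilibrium of `H(A, B)`
with welfare `1`. -/
theorem stmt18 (n m : ℕ) (M : ℝ) (hM : 0 < M)
    (A : Matrix (Fin n) (Fin n) ℝ)
    (hA01 : ∀ i j, A i j = 0 ∨ A i j = 1) (hAdiag : ∀ i, A i i = 1)
    (hAsymm : ∀ i j, A i j = A j i)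
    (B : Matrix (Fin m) (Fin n) ℝ) (hB : ∀ i j, B i j = 0 ∨ B i j = M)
    (K : Finset (Fin n)) (hK : 0 < K.card)
    (hKclique : ∀ i ∈ K, ∀ j ∈ K, A i j = 1)
    (hBrow : ∀ i : Fin m, (1 / (K.card : ℝ)) * ∑ j ∈ K, B i j ≤ 1)
    (u : (Fin n ⊕ Fin m) → ℝ)
    (hu : ∀ i : Fin n, u (Sum.inl i) = if i ∈ K then 1 / (K.card : ℝ) else 0)
    (hu0 : ∀ j : Fin m, u (Sum.inr j) = 0) :
    (∀ x' : (Fin n ⊕ Fin m) → ℝ, IsDist x' →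
      ∑ a, ∑ b, x' a * HR n m A B a b * u b ≤ ∑ a, ∑ b, u a * HR n m A B a b * u b) ∧
    (∀ y' : (Fin n ⊕ Fin m) → ℝ, IsDist y' →
      ∑ a, ∑ b, u a * HC n m A B a b * y' b ≤ ∑ a, ∑ b, u a * HC n m A B a b * u b) ∧
    ∑ a, ∑ b, u a * (HR n m A B a b + HC n m A B a b) * u b = 1 := by
  have hk0 : (0:ℝ) < (K.card : ℝ) := by exact_mod_cast hK
  have hkne : (K.card : ℝ) ≠ 0 := ne_of_gt hk0
  have hkinv : (0:ℝ) ≤ 1 / (K.card : ℝ) := by positivity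
  have hA1 : ∀ i j, A i j ≤ 1 := by
    intro i j; rcases hA01 i j with h | h <;> simp [h]
  -- entry values
  have eRll : ∀ i j, HR n m A B (Sum.inl i) (Sum.inl j) = (1/2) * A i j := by
    intro i j; simp [HR]
  have eRrl : ∀ i j, HR n m A B (Sum.inr i) (Sum.inl j) = (1/2) * B i j := by
    intro i j; simp [HR]
  have eCll : ∀ i j, HC n m A B (Sum.inl i) (Sum.inl j) = (1/2) * A i j := by
    intro i j; simp [HC]
  have eClr : ∀ i j, HC n m A B (Sum.inl i) (Sum.inr j) = (1/2) * B j i := by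
    intro i j; simp [HC]
  -- sums against u
  have usumR : ∀ f : Fin n → ℝ, ∑ j : Fin n, f j * u (Sum.inl j)
      = ∑ j ∈ K, f j * (1 / (K.card : ℝ)) := by
    intro f
    have h : ∀ j, f j * u (Sum.inl j)
        = if j ∈ K then f j * (1 / (K.card : ℝ)) else 0 := by
      intro j; rw [hu]; split <;> simp
    rw [Finset.sum_congr rfl fun j _ => h j, Finset.sum_ite_mem, Finset.univ_inter]
  have usumL : ∀ f : Fin n → ℝ, ∑ j : Fin n, u (Sum.inl j) * f j
      = ∑ j ∈ K, (1 / (K.card : ℝ)) * f j := by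
    intro f
    have h : ∀ j, u (Sum.inl j) * f j
        = if j ∈ K then (1 / (K.card : ℝ)) * f j else 0 := by
      intro j; rw [hu]; split <;> simp
    rw [Finset.sum_congr rfl fun j _ => h j, Finset.sum_ite_mem, Finset.univ_inter]
  -- half bound helper
  have hconst : ∑ _j ∈ K, (1/2) * (1 / (K.card : ℝ)) = 1/2 := by
    rw [Finset.sum_const, nsmul_eq_mul]
    field_simp
  -- row player's payoff against u is at most 1/2 for every pure row
  have hrow : ∀ a, ∑ b, HR n m A B a b * u b ≤ 1/2 := by
    intro a
    cases a with
    | inl i =>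
        have h1 : ∑ b, HR n m A B (Sum.inl i) b * u b
            = ∑ j ∈ K, (1/2) * A i j * (1 / (K.card : ℝ)) := by
          rw [Fintype.sum_sum_type]
          simp only [hu0, mul_zero, Finset.sum_const_zero, add_zero]
          rw [usumR (fun j => HR n m A B (Sum.inl i) (Sum.inl j))]
          exact Finset.sum_congr rfl fun j _ => by rw [eRll]
        rw [h1]
        calc ∑ j ∈ K, 1 / 2 * A i j * (1 / (K.card : ℝ))
            ≤ ∑ _j ∈ K, (1/2) * (1 / (K.card : ℝ)) :=
              Finset.sum_le_sum fun j _ => by nlinarith [hA1 i j]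
          _ = 1/2 := hconst
    | inr i =>
        have h1 : ∑ b, HR n m A B (Sum.inr i) b * u b
            = (1/2) * ((1 / (K.card : ℝ)) * ∑ j ∈ K, B i j) := by
          rw [Fintype.sum_sum_type]
          simp only [hu0, mul_zero, Finset.sum_const_zero, add_zero]
          rw [usumR (fun j => HR n m A B (Sum.inr i) (Sum.inl j))]
          rw [Finset.mul_sum, Finset.mul_sum]
          exact Finset.sum_congr rfl fun j _ => by rw [eRrl]; ring
        rw [h1]
        have := hBrow i
        linarith
  -- column player's payoff against u is at most 1/2 for every pure column
  have hcol : ∀ b, ∑ a, u a * HC n m A B a b ≤ 1/2 := by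
    intro b
    cases b with
    | inl j =>
        have h1 : ∑ a, u a * HC n m A B a (Sum.inl j)
            = ∑ i ∈ K, (1 / (K.card : ℝ)) * ((1/2) * A i j) := by
          rw [Fintype.sum_sum_type]
          simp only [hu0, zero_mul, Finset.sum_const_zero, add_zero]
          rw [usumL (fun i => HC n m A B (Sum.inl i) (Sum.inl j))]
          exact Finset.sum_congr rfl fun i _ => by rw [eCll]
        rw [h1]
        calc ∑ i ∈ K, (1 / (K.card : ℝ)) * (1 / 2 * A i j)
            ≤ ∑ _i ∈ K, (1/2) * (1 / (K.card : ℝ)) :=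
              Finset.sum_le_sum fun i _ => by nlinarith [hA1 i j]
          _ = 1/2 := hconst
    | inr j =>
        have h1 : ∑ a, u a * HC n m A B a (Sum.inr j)
            = (1/2) * ((1 / (K.card : ℝ)) * ∑ i ∈ K, B j i) := by
          rw [Fintype.sum_sum_type]
          simp only [hu0, zero_mul, Finset.sum_const_zero, add_zero]
          rw [usumL (fun i => HC n m A B (Sum.inl i) (Sum.inr j))]
          rw [Finset.mul_sum, Finset.mul_sum]
          exact Finset.sum_congr rfl fun i _ => by rw [eClr]; ring
        rw [h1]
        have := hBrow j
        linarith
  -- double sum reduction for u ⊗ u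
  have hdouble : ∀ P : Matrix (Fin n ⊕ Fin m) (Fin n ⊕ Fin m) ℝ,
      ∑ a, ∑ b, u a * P a b * u b
        = ∑ i ∈ K, ∑ j ∈ K,
            (1 / (K.card : ℝ)) * P (Sum.inl i) (Sum.inl j) * (1 / (K.card : ℝ)) := by
    intro P
    have hinner : ∀ a, ∑ b, u a * P a b * u b
        = ∑ j ∈ K, u a * P a (Sum.inl j) * (1 / (K.card : ℝ)) := by
      intro a
      rw [Fintype.sum_sum_type]
      simp only [hu0, mul_zero, Finset.sum_const_zero, add_zero]
      exact usumR (fun j => u a * P a (Sum.inl j))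
    rw [Finset.sum_congr rfl fun a _ => hinner a]
    rw [Fintype.sum_sum_type]
    have hz : ∑ a : Fin m, ∑ j ∈ K, u (Sum.inr a) * P (Sum.inr a) (Sum.inl j)
        * (1 / (K.card : ℝ)) = 0 := by
      simp [hu0]
    rw [hz, add_zero]
    have h2 : ∀ i : Fin n, ∑ j ∈ K, u (Sum.inl i) * P (Sum.inl i) (Sum.inl j)
        * (1 / (K.card : ℝ))
        = u (Sum.inl i) * ∑ j ∈ K, P (Sum.inl i) (Sum.inl j) * (1 / (K.card : ℝ)) := by
      intro i; rw [Finset.mul_sum]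
      exact Finset.sum_congr rfl fun j _ => by ring
    rw [Finset.sum_congr rfl fun i _ => h2 i]
    rw [usumL (fun i => ∑ j ∈ K, P (Sum.inl i) (Sum.inl j) * (1 / (K.card : ℝ)))]
    refine Finset.sum_congr rfl fun i _ => ?_
    rw [Finset.mul_sum]
    exact Finset.sum_congr rfl fun j _ => by ring
  -- value of the equilibrium for HR
  have hRval : ∑ a, ∑ b, u a * HR n m A B a b * u b = 1/2 := by
    rw [hdouble]
    have : ∀ i ∈ K, ∀ j ∈ K,
        (1 / (K.card : ℝ)) * HR n m A B (Sum.inl i) (Sum.inl j) * (1 / (K.card : ℝ))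
          = (1 / (K.card : ℝ)) * (1/2) * (1 / (K.card : ℝ)) := by
      intro i hi j hj; rw [eRll, hKclique i hi j hj]; ring
    rw [Finset.sum_congr rfl fun i hi => Finset.sum_congr rfl fun j hj => this i hi j hj]
    rw [Finset.sum_const, Finset.sum_const, nsmul_eq_mul, nsmul_eq_mul]
    field_simp
  have hCval : ∑ a, ∑ b, u a * HC n m A B a b * u b = 1/2 := by
    rw [hdouble]
    have : ∀ i ∈ K, ∀ j ∈ K,
        (1 / (K.card : ℝ)) * HC n m A B (Sum.inl i) (Sum.inl j) * (1 / (K.card : ℝ))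
          = (1 / (K.card : ℝ)) * (1/2) * (1 / (K.card : ℝ)) := by
      intro i hi j hj; rw [eCll, hKclique i hi j hj]; ring
    rw [Finset.sum_congr rfl fun i hi => Finset.sum_congr rfl fun j hj => this i hi j hj]
    rw [Finset.sum_const, Finset.sum_const, nsmul_eq_mul, nsmul_eq_mul]
    field_simp
  refine ⟨?_, ?_, ?_⟩
  · intro x' hx'
    rw [hRval]
    have step : ∀ a, ∑ b, x' a * HR n m A B a b * u b
        = x' a * ∑ b, HR n m A B a b * u b := by
      intro a; rw [Finset.mul_sum]
      exact Finset.sum_congr rfl fun b _ => by ring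
    rw [Finset.sum_congr rfl fun a _ => step a]
    calc ∑ a, x' a * ∑ b, HR n m A B a b * u b
        ≤ ∑ a, x' a * (1/2) :=
          Finset.sum_le_sum fun a _ =>
            mul_le_mul_of_nonneg_left (hrow a) (hx'.1 a)
      _ = 1/2 := by rw [← Finset.sum_mul, hx'.2, one_mul]
  · intro y' hy'
    rw [hCval]
    rw [Finset.sum_comm]
    have step : ∀ b, ∑ a, u a * HC n m A B a b * y' b
        = (∑ a, u a * HC n m A B a b) * y' b := by
      intro b; rw [Finset.sum_mul]
    rw [Finset.sum_congr rfl fun b _ => step b]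
    calc ∑ b, (∑ a, u a * HC n m A B a b) * y' b
        ≤ ∑ b, (1/2) * y' b :=
          Finset.sum_le_sum fun b _ =>
            mul_le_mul_of_nonneg_right (hcol b) (hy'.1 b)
      _ = 1/2 := by rw [← Finset.mul_sum, hy'.2, mul_one]
  · have hsplit : ∀ a b, u a * (HR n m A B a b + HC n m A B a b) * u b
        = u a * HR n m A B a b * u b + u a * HC n m A B a b * u b := by
      intro a b; ring
    calc ∑ a, ∑ b, u a * (HR n m A B a b + HC n m A B a b) * u b
        = (∑ a, ∑ b, u a * HR n m A B a b * u b)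
          + ∑ a, ∑ b, u a * HC n m A B a b * u b := by
          rw [← Finset.sum_add_distrib]
          refine Finset.sum_congr rfl fun a _ => ?_
          rw [← Finset.sum_add_distrib]
          exact Finset.sum_congr rfl fun b _ => hsplit a b
      _ = 1 := by rw [hRval, hCval]; norm_num
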